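/- Let n ≥ 1, let L₂, …, Lₙ be Kripke complete monomodal logics, and let L = T × L₂ × … × Lₙ. Fix an n-modal formula φ whose variables are among p₁, …, p_m and let A and σ be the formula and translation defined from φ. Then φ ∈ L if and only if A → σ(φ) ∈ L. (Lemma 3.1) -/

import Mathlib

namespace ModalProducts

/-- `N`-modal formulas over propositional variables indexed by `ℕ`
(the variable `pₖ` is `var k`; the extra variable `p` is `var 0`). -/
inductive MF (N : ℕ) : Type
  | var : ℕ → MF N
  | bot : MF N
  | and : MF N → MF N → MF N
  | or  : MF N → MF N → MF N
  | imp : MF N → MF N → MF N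
  | box : Fin N → MF N → MF N
deriving DecidableEq

namespace MF

variable {N : ℕ}

/-- negation: `¬ψ = ψ → ⊥`. -/
def neg (φ : MF N) : MF N := imp φ bot

/-- diamond: `◇ᵢψ = ¬□ᵢ¬ψ`. -/
def dia (i : Fin N) (φ : MF N) : MF N := neg (box i (neg φ))

/-- modal depth. -/
def md : MF N → ℕ
  | var _ => 0
  | bot => 0
  | and φ ψ => max (md φ) (md ψ)
  | or φ ψ => max (md φ) (md ψ)
  | imp φ ψ => max (md φ) (md ψ)
  | box _ φ => md φ + 1

/-- length (number of symbols; the variable `pₖ` counts as `k+1` symbols,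
accounting for the subscript). -/
def len : MF N → ℕ
  | var q => q + 1
  | bot => 1
  | and φ ψ => len φ + len ψ + 1
  | or φ ψ => len φ + len ψ + 1
  | imp φ ψ => len φ + len ψ + 1
  | box _ φ => len φ + 1

/-- the set of propositional variables occurring in a formula. -/
def vars : MF N → Set ℕ
  | var q => {q}
  | bot => ∅
  | and φ ψ => vars φ ∪ vars ψ
  | or φ ψ => vars φ ∪ vars ψ
  | imp φ ψ => vars φ ∪ vars ψ
  | box _ φ => vars φ

/-- the largest index of a variable occurring in a formula (0 if none). -/
def maxVar : MF N → ℕ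
  | var q => q
  | bot => 0
  | and φ ψ => max (maxVar φ) (maxVar ψ)
  | or φ ψ => max (maxVar φ) (maxVar ψ)
  | imp φ ψ => max (maxVar φ) (maxVar ψ)
  | box _ φ => maxVar φ

/-- the list of subformulas of a formula. -/
def subfs : MF N → List (MF N)
  | var q => [var q]
  | bot => [bot]
  | and φ ψ => and φ ψ :: (subfs φ ++ subfs ψ)
  | or φ ψ => or φ ψ :: (subfs φ ++ subfs ψ)
  | imp φ ψ => imp φ ψ :: (subfs φ ++ subfs ψ)
  | box i φ => box i φ :: subfs φ

/-- uniform substitution of formulas for variables. -/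
def subst (s : ℕ → MF N) : MF N → MF N
  | var q => s q
  | bot => bot
  | and φ ψ => and (subst s φ) (subst s ψ)
  | or φ ψ => or (subst s φ) (subst s ψ)
  | imp φ ψ => imp (subst s φ) (subst s ψ)
  | box i φ => box i (subst s φ)

end MF

/-- `θ` is a subformula of `φ`. -/
def Subformula {N : ℕ} (θ φ : MF N) : Prop := θ ∈ φ.subfs

/-- A Kripke `N`-frame: a nonempty set of points with `N` accessibility relations. -/
structure Frame (N : ℕ) where
  W : Type
  nonempty : Nonempty W
  R : Fin N → W → W → Prop

/-- Truth of a formula at a point of a frame under a valuation. -/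
def Sat {N : ℕ} (F : Frame N) (v : ℕ → Set F.W) : F.W → MF N → Prop
  | x, .var q => x ∈ v q
  | _, .bot => False
  | x, .and φ ψ => Sat F v x φ ∧ Sat F v x ψ
  | x, .or φ ψ => Sat F v x φ ∨ Sat F v x ψ
  | x, .imp φ ψ => Sat F v x φ → Sat F v x ψ
  | x, .box i φ => ∀ y, F.R i x y → Sat F v y φ

/-- Validity of a formula in a frame: truth at every point under every valuation. -/
def Valid {N : ℕ} (F : Frame N) (φ : MF N) : Prop := ∀ (v : ℕ → Set F.W) (x : F.W), Sat F v x φ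

/-- A set of formulas is valid in a frame if all of its members are. -/
def ValidSet {N : ℕ} (F : Frame N) (L : Set (MF N)) : Prop := ∀ φ ∈ L, Valid F φ

/-- The logic of a class of frames. -/
def Logic {N : ℕ} (C : Set (Frame N)) : Set (MF N) := {φ | ∀ F ∈ C, Valid F φ}

/-- A logic is Kripke complete if it is the logic of some nonempty class of frames. -/
def KripkeComplete {N : ℕ} (L : Set (MF N)) : Prop :=
  ∃ C : Set (Frame N), C.Nonempty ∧ L = Logic C

/-- The product of `N` 1-frames. -/
def prodFrame {N : ℕ} (Fs : Fin N → Frame 1) : Frame N where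
  W := ∀ i, (Fs i).W
  nonempty := ⟨fun i => (Fs i).nonempty.some⟩
  R := fun i x y => (Fs i).R 0 (x i) (y i) ∧ ∀ k, k ≠ i → x k = y k

/-- The product of `N` Kripke complete monomodal logics: the logic of the class of
products of frames of the factors. -/
def productLogic {N : ℕ} (Ls : Fin N → Set (MF 1)) : Set (MF N) :=
  Logic {F | ∃ Fs : Fin N → Frame 1, (∀ i, ValidSet (Fs i) (Ls i)) ∧ F = prodFrame Fs}

/-- A 1-frame is reflexive. -/
def ReflexiveFrame (F : Frame 1) : Prop := ∀ x, F.R 0 x x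

/-- The logic `T` of all reflexive 1-frames. -/
def logicT : Set (MF 1) := Logic {F | ReflexiveFrame F}

/-- The logic `K` of all 1-frames. -/
def logicK : Set (MF 1) := Logic Set.univ

/-- The logic `S5` of all 1-frames whose relation is an equivalence. -/
def logicS5 : Set (MF 1) := Logic {F | Equivalence (F.R 0)}

section Translation

variable {n : ℕ}

/-- the variable `p`. -/
def pv : MF (n+1) := .var 0

/-- `◆₁ψ = ◇₁(¬p ∧ ◇₁(p ∧ ψ))`. -/
def blackDia (ψ : MF (n+1)) : MF (n+1) :=
  MF.dia 0 (.and (MF.neg pv) (MF.dia 0 (.and pv ψ)))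

/-- `α_k = ◆₁ᵏ □₁ p`. -/
def alphaF (k : ℕ) : MF (n+1) := blackDia^[k] (.box 0 pv)

/-- `β_k = ¬p ∧ ◇₁(p ∧ α_k)`. -/
def betaF (k : ℕ) : MF (n+1) := .and (MF.neg pv) (MF.dia 0 (.and pv (alphaF k)))

/-- `B = β_{m+1}`. -/
def Bf (m : ℕ) : MF (n+1) := betaF (m+1)

/-- The translation `σ`: `σ(p_k) = β_k`, `σ(⊥) = ⊥`, `σ` commutes with `∧, ∨, →`,
and `σ(□ᵢψ) = □ᵢ(B → σ(ψ))`. -/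
def sigmaT (m : ℕ) : MF (n+1) → MF (n+1)
  | .var k => betaF k
  | .bot => .bot
  | .and φ ψ => .and (sigmaT m φ) (sigmaT m ψ)
  | .or φ ψ => .or (sigmaT m φ) (sigmaT m ψ)
  | .imp φ ψ => .imp (sigmaT m φ) (sigmaT m ψ)
  | .box i φ => .box i (.imp (Bf m) (sigmaT m φ))

/-- conjunction of a head formula with a list of formulas. -/
def bigAnd (ψ : MF (n+1)) (l : List (MF (n+1))) : MF (n+1) := l.foldl .and ψ

/-- `□^{≤k}`: `□^{≤0}ψ = ψ`, `□^{≤k+1}ψ = □^{≤k}ψ ∧ □₁□^{≤k}ψ ∧ … ∧ □ₙ□^{≤k}ψ`. -/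
def boxLe : ℕ → MF (n+1) → MF (n+1)
  | 0, ψ => ψ
  | k+1, ψ => bigAnd (boxLe k ψ) (List.ofFn fun i : Fin (n+1) => .box i (boxLe k ψ))

/-- `□₋₁^{≤k}`: like `□^{≤k}` but using only `□₂, …, □ₙ`. -/
def boxLeTail : ℕ → MF (n+1) → MF (n+1)
  | 0, ψ => ψ
  | k+1, ψ => bigAnd (boxLeTail k ψ) (List.ofFn fun i : Fin n => .box i.succ (boxLeTail k ψ))

/-- `◇₋₁^{≤k}ψ = ¬□₋₁^{≤k}¬ψ`. -/
def diaLeTail (k : ℕ) (ψ : MF (n+1)) : MF (n+1) := MF.neg (boxLeTail k (MF.neg ψ))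

/-- `A = B ∧ □^{≤md φ}(B → □₋₁^{≤md φ}B) ∧ □^{≤md φ}(◇₋₁^{≤md φ}B → B)`. -/
def Af (m : ℕ) (φ : MF (n+1)) : MF (n+1) :=
  .and (Bf m)
    (.and (boxLe φ.md (.imp (Bf m) (boxLeTail φ.md (Bf m))))
          (boxLe φ.md (.imp (diaLeTail φ.md (Bf m)) (Bf m))))

end Translation

end ModalProducts

/-!
Both directions replace the first factor `H` of a product `H × T` and transfer truth along the
induced map of products by induction on formulas (`sat_iff_sat_sigmaT`). Since `σ` relativises
every box to `B`, that map only has to be a bounded morphism onto the `B`-points, and only up to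
depth `md φ`.

If `φ` is valid and `A` holds at `x`, then `A` makes the truth of `B` within `md φ` steps of `x`
depend on the first coordinate alone. Restricting `H` to the set `S` of those first coordinates
keeps it reflexive, and `φ`, true there under `pₖ ↦ βₖ`, yields `σ(φ)` at `x`.

Conversely, given a model of `¬φ`, hang below each point `a` of `H` chains of length `2k` on which
`p` alternates, lit over `(a, t)` for `k = m + 1`, and for `k ≤ m` exactly when `pₖ` holds at
`(a, t)`. On a lit chain `p ∧ α_c` holds only at position `2c`, so `βₖ` expresses `pₖ`, `B`
holds exactly at the original points, and `A` holds there trivially.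
-/

namespace ModalProducts

section Semantics

variable {N : ℕ} {F : Frame N} {v : ℕ → Set F.W} {x : F.W}

@[simp] lemma sat_and {a b : MF N} : Sat F v x (.and a b) ↔ Sat F v x a ∧ Sat F v x b := Iff.rfl

@[simp] lemma sat_box {i : Fin N} {a : MF N} :
    Sat F v x (.box i a) ↔ ∀ y, F.R i x y → Sat F v y a := Iff.rfl

@[simp] lemma sat_neg {a : MF N} : Sat F v x (MF.neg a) ↔ ¬ Sat F v x a := Iff.rfl

lemma sat_dia {i : Fin N} {a : MF N} :
    Sat F v x (MF.dia i a) ↔ ∃ y, F.R i x y ∧ Sat F v y a := by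
  simp [MF.dia]

lemma reflexiveFrame_iff_validSet_logicT {G : Frame 1} :
    ReflexiveFrame G ↔ ValidSet G logicT := by
  refine ⟨fun h _ hψ => hψ G h, fun h x => ?_⟩
  have hT : MF.imp (.box 0 (.var 0)) (.var 0) ∈ logicT := fun _ hG _ y hy => hy y (hG y)
  exact h _ hT (fun _ => {y | G.R 0 x y}) x fun _ hy => hy

end Semantics

def ReachWithin {N M : ℕ} (F : Frame N) (r : Fin M → Fin N) : ℕ → F.W → F.W → Prop
  | 0 => Eq
  | k + 1 => fun x y => ReachWithin F r k x y ∨ ∃ i z, F.R (r i) x z ∧ ReachWithin F r k z y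

lemma ReachWithin.refl {N M : ℕ} {F : Frame N} {r : Fin M → Fin N} :
    ∀ k x, ReachWithin F r k x x
  | 0, _ => rfl
  | k + 1, x => Or.inl (ReachWithin.refl k x)

section Depth

variable {n : ℕ} {F : Frame (n + 1)} {v : ℕ → Set F.W}

lemma sat_bigAnd_ofFn_box {M : ℕ} (r : Fin M → Fin (n + 1)) (ψ χ : MF (n + 1)) (x : F.W) :
    Sat F v x (bigAnd ψ (List.ofFn fun i => .box (r i) χ)) ↔
      Sat F v x ψ ∧ ∀ i y, F.R (r i) x y → Sat F v y χ := by
  suffices ∀ l : List (MF (n + 1)), ∀ ψ,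
      Sat F v x (bigAnd ψ l) ↔ Sat F v x ψ ∧ ∀ θ ∈ l, Sat F v x θ by
    simp [this]
  intro l
  induction l with
  | nil => simp [bigAnd]
  | cons θ l ih =>
    intro ψ
    rw [show bigAnd ψ (θ :: l) = bigAnd (ψ.and θ) l from rfl, ih]
    simp [and_assoc]

lemma sat_boxLe (k : ℕ) (ψ : MF (n + 1)) (x : F.W) :
    Sat F v x (boxLe k ψ) ↔ ∀ y, ReachWithin F id k x y → Sat F v y ψ := by
  induction k generalizing x with
  | zero => exact ⟨fun h y hy => hy ▸ h, fun h => h x rfl⟩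
  | succ k ih =>
    refine (sat_bigAnd_ofFn_box id _ _ x).trans ?_
    simp only [ih, ReachWithin]
    grind

lemma sat_boxLeTail (k : ℕ) (ψ : MF (n + 1)) (x : F.W) :
    Sat F v x (boxLeTail k ψ) ↔ ∀ y, ReachWithin F Fin.succ k x y → Sat F v y ψ := by
  induction k generalizing x with
  | zero => exact ⟨fun h y hy => hy ▸ h, fun h => h x rfl⟩
  | succ k ih =>
    refine (sat_bigAnd_ofFn_box Fin.succ _ _ x).trans ?_
    simp only [ih, ReachWithin]
    grind

lemma sat_diaLeTail (k : ℕ) (ψ : MF (n + 1)) (x : F.W) :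
    Sat F v x (diaLeTail k ψ) ↔ ∃ y, ReachWithin F Fin.succ k x y ∧ Sat F v y ψ := by
  simp [diaLeTail, sat_boxLeTail]

end Depth

section Equiv

variable {N : ℕ} {F G : Frame N} (e : F.W ≃ G.W)
  (he : ∀ i x y, G.R i (e x) (e y) ↔ F.R i x y)
include he

lemma sat_equiv (v : ℕ → Set G.W) (φ : MF N) (x : F.W) :
    Sat G v (e x) φ ↔ Sat F (fun q => e ⁻¹' v q) x φ := by
  induction φ generalizing x with
  | var q => exact Iff.rfl
  | bot => exact Iff.rfl
  | and a b iha ihb => exact and_congr (iha x) (ihb x)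
  | or a b iha ihb => exact or_congr (iha x) (ihb x)
  | imp a b iha ihb => exact imp_congr (iha x) (ihb x)
  | box i a ih =>
    exact e.forall_congr_right.symm.trans (forall_congr' fun y => imp_congr (he i x y) (ih y))

lemma valid_iff_of_equiv (φ : MF N) : Valid G φ ↔ Valid F φ := by
  refine ⟨fun h v x => ?_, fun h v y => ?_⟩
  · have := (sat_equiv e he (fun q => e.symm ⁻¹' v q) φ x).1 (h _ _)
    simpa [← Set.preimage_comp] using this
  · simpa using (sat_equiv e he v φ (e.symm y)).2 (h _ _)

end Equiv

-- Reducible so that a pair `(c, t)` is a point of `H.consProd T` up to reducible defeq, as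
-- `simp` and `rw` need.
abbrev Frame.consProd {n : ℕ} (H : Frame 1) (T : Frame n) : Frame (n + 1) where
  W := H.W × T.W
  nonempty := ⟨(H.nonempty.some, T.nonempty.some)⟩
  R := Fin.cases (fun x y => H.R 0 x.1 y.1 ∧ x.2 = y.2) fun j x y => x.1 = y.1 ∧ T.R j x.2 y.2

section ConsProd

variable {n : ℕ} {H H' : Frame 1} {T : Frame n}

lemma valid_prodFrame_cons_iff {Ts : Fin n → Frame 1} (φ : MF (n + 1)) :
    Valid (prodFrame (Fin.cons H Ts)) φ ↔ Valid (H.consProd (prodFrame Ts)) φ := by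
  refine valid_iff_of_equiv
    (Fin.consEquiv fun i => (Fin.cons (α := fun _ => Frame 1) H Ts i).W) ?_ φ
  rintro i ⟨c, t⟩ ⟨c', t'⟩
  cases i using Fin.cases with
  | zero =>
    refine and_congr Iff.rfl ⟨fun h => funext fun j => h j.succ (Fin.succ_ne_zero j), ?_⟩
    rintro rfl k hk
    cases k using Fin.cases with
    | zero => exact absurd rfl hk
    | succ l => rfl
  | succ j =>
    refine ⟨fun ⟨hR, h⟩ => ⟨h 0 (Fin.succ_ne_zero j).symm, hR,
      fun l hl => h l.succ (Fin.succ_injective _ |>.ne hl)⟩,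
      fun ⟨h0, hR, h⟩ => ⟨hR, fun k hk => ?_⟩⟩
    cases k using Fin.cases with
    | zero => exact h0
    | succ l => exact h l fun e => hk (e ▸ rfl)

variable {v : ℕ → Set (H.consProd T).W}

lemma sat_dia_zero_consProd {c : H.W} {t : T.W} {ψ : MF (n + 1)} :
    Sat (H.consProd T) v (c, t) (MF.dia 0 ψ) ↔
      ∃ c', H.R 0 c c' ∧ Sat (H.consProd T) v (c', t) ψ := by
  rw [sat_dia]
  exact ⟨fun ⟨⟨c', _⟩, ⟨hc, rfl⟩, h⟩ => ⟨c', hc, h⟩,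
    fun ⟨c', hc, h⟩ => ⟨(c', t), ⟨hc, rfl⟩, h⟩⟩

lemma sat_box_zero_consProd {c : H.W} {t : T.W} {ψ : MF (n + 1)} :
    Sat (H.consProd T) v (c, t) (.box 0 ψ) ↔
      ∀ c', H.R 0 c c' → Sat (H.consProd T) v (c', t) ψ := by
  refine ⟨fun h c' hc => h (c', t) ⟨hc, rfl⟩, fun h ⟨c', t'⟩ ⟨hc, ht⟩ => ?_⟩
  obtain rfl : t = t' := ht
  exact h c' hc

lemma ReachWithin.consProd_fst {k : ℕ} {x y : (H.consProd T).W}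
    (h : ReachWithin (H.consProd T) id k x y) (t : T.W) :
    ReachWithin (H.consProd T) id k (x.1, t) (y.1, t) := by
  induction k generalizing x with
  | zero => cases h; exact ReachWithin.refl 0 _
  | succ k ih =>
    rcases h with h | ⟨i, w, hxw, hw⟩
    · exact Or.inl (ih h)
    cases i using Fin.cases with
    | zero => exact Or.inr ⟨0, (w.1, t), ⟨hxw.1, rfl⟩, ih hw⟩
    | succ j => exact Or.inl (hxw.1 ▸ ih hw)

lemma ReachWithin.consProd_snd {k : ℕ} {x y : (H.consProd T).W}
    (h : ReachWithin (H.consProd T) id k x y) (a : H.W) :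
    ReachWithin (H.consProd T) Fin.succ k (a, x.2) (a, y.2) := by
  induction k generalizing x with
  | zero => cases h; exact ReachWithin.refl 0 _
  | succ k ih =>
    rcases h with h | ⟨i, w, hxw, hw⟩
    · exact Or.inl (ih h)
    cases i using Fin.cases with
    | zero => exact Or.inl (hxw.2 ▸ ih hw)
    | succ j => exact Or.inr ⟨j, (a, w.2), ⟨rfl, hxw.2⟩, ih hw⟩

lemma ReachWithin.fst_eq {k : ℕ} {x y : (H.consProd T).W}
    (h : ReachWithin (H.consProd T) Fin.succ k x y) : x.1 = y.1 := by
  induction k generalizing x with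
  | zero => cases h; rfl
  | succ k ih =>
    rcases h with h | ⟨j, w, hxw, hw⟩
    · exact ih h
    · exact hxw.1.trans (ih hw)

variable {h : H.W → H'.W} (hR : ∀ a b, H'.R 0 (h a) (h b) ↔ H.R 0 a b)
include hR

lemma consProd_R_map_fst {i : Fin (n + 1)} {x y : (H.consProd T).W}
    (hxy : (H.consProd T).R i x y) :
    (H'.consProd T).R i (Prod.map h id x) (Prod.map h id y) := by
  cases i using Fin.cases with
  | zero => exact ⟨(hR _ _).2 hxy.1, hxy.2⟩
  | succ j => exact ⟨congrArg h hxy.1, hxy.2⟩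

lemma exists_consProd_R_map_fst_eq {i : Fin (n + 1)} {x : (H.consProd T).W}
    {z : (H'.consProd T).W} (hxz : (H'.consProd T).R i (Prod.map h id x) z)
    (hz : z.1 ∈ Set.range h) :
    ∃ y, (H.consProd T).R i x y ∧ Prod.map h id y = z := by
  obtain ⟨b, hb⟩ := hz
  cases i using Fin.cases with
  | zero => exact ⟨(b, x.2), ⟨(hR _ _).1 (hb ▸ hxz.1), rfl⟩, Prod.ext hb hxz.2⟩
  | succ j => exact ⟨(x.1, z.2), ⟨rfl, hxz.2⟩, Prod.ext hxz.1 rfl⟩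

end ConsProd

section Transfer

variable {n m : ℕ} {F F' : Frame (n + 1)} {v : ℕ → Set F.W} {v' : ℕ → Set F'.W}

/-- `σ` is faithful along a map `f` that acts as a bounded morphism onto the `B`-points of `F`
for `k` more steps from every point of `Z k`. -/
theorem sat_iff_sat_sigmaT (f : F'.W → F.W) (Z : ℕ → F'.W → Prop) (Q : Set ℕ)
    (hvar : ∀ y, ∀ q ∈ Q, y ∈ v' q ↔ Sat F v (f y) (betaF q))
    (hforth : ∀ k i y z, Z (k + 1) y → F'.R i y z →
      Z k z ∧ F.R i (f y) (f z) ∧ Sat F v (f z) (Bf m))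
    (hback : ∀ k i y z, Z (k + 1) y → F.R i (f y) z → Sat F v z (Bf m) →
      ∃ z', F'.R i y z' ∧ f z' = z)
    (ψ : MF (n + 1)) (hψ : ψ.vars ⊆ Q) {k : ℕ} (hk : ψ.md ≤ k) {y : F'.W} (hy : Z k y) :
    Sat F' v' y ψ ↔ Sat F v (f y) (sigmaT m ψ) := by
  induction ψ generalizing k y with
  | var q => exact hvar y q (hψ rfl)
  | bot => exact Iff.rfl
  | and a b iha ihb =>
    obtain ⟨ha, hb⟩ := Set.union_subset_iff.1 hψ
    exact and_congr (iha ha (le_of_max_le_left hk) hy) (ihb hb (le_of_max_le_right hk) hy)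
  | or a b iha ihb =>
    obtain ⟨ha, hb⟩ := Set.union_subset_iff.1 hψ
    exact or_congr (iha ha (le_of_max_le_left hk) hy) (ihb hb (le_of_max_le_right hk) hy)
  | imp a b iha ihb =>
    obtain ⟨ha, hb⟩ := Set.union_subset_iff.1 hψ
    exact imp_congr (iha ha (le_of_max_le_left hk) hy) (ihb hb (le_of_max_le_right hk) hy)
  | box i a ih =>
    replace hk : a.md + 1 ≤ k := hk
    obtain ⟨k, rfl⟩ : ∃ k', k = k' + 1 := ⟨k - 1, by omega⟩
    replace hk : a.md ≤ k := by omega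
    constructor
    · intro h z hz hBz
      obtain ⟨z', hz', rfl⟩ := hback k i y z hy hz hBz
      exact (ih hψ hk (hforth k i y z' hy hz').1).1 (h z' hz')
    · intro h z hz
      obtain ⟨hZ, hfz, hB⟩ := hforth k i y z hy hz
      exact (ih hψ hk hZ).2 (h _ hfz hB)

end Transfer

def Frame.restrict (G : Frame 1) (S : Set G.W) (hS : S.Nonempty) : Frame 1 :=
  ⟨S, hS.to_subtype, fun i a b => G.R i a b⟩

section Forward

variable {n m : ℕ} {H : Frame 1} {T : Frame n} {φ : MF (n + 1)}

lemma sat_Bf_iff_of_sat_Af {v : ℕ → Set (H.consProd T).W} {x z : (H.consProd T).W}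
    (hA : Sat (H.consProd T) v x (Af m φ)) (hz : ReachWithin (H.consProd T) id φ.md x z) :
    Sat (H.consProd T) v z (Bf m) ↔ Sat (H.consProd T) v (z.1, x.2) (Bf m) := by
  obtain ⟨-, hB₁, hB₂⟩ := hA
  have hx' : ReachWithin _ id φ.md x (z.1, x.2) := hz.consProd_fst x.2
  have hz' : ReachWithin _ Fin.succ φ.md (z.1, x.2) z := hz.consProd_snd z.1
  rw [sat_boxLe] at hB₁ hB₂
  exact ⟨fun h => hB₂ _ hx' ((sat_diaLeTail _ _ _).2 ⟨z, hz', h⟩),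
    fun h => (sat_boxLeTail _ _ _).1 (hB₁ _ hx' h) z hz'⟩

theorem valid_Af_imp_sigmaT_of_forall_valid
    (hφ : ∀ G : Frame 1, ReflexiveFrame G → Valid (G.consProd T) φ)
    (hH : ReflexiveFrame H) : Valid (H.consProd T) (MF.imp (Af m φ) (sigmaT m φ)) := by
  intro v x hA
  set S : Set H.W := {a | Sat (H.consProd T) v (a, x.2) (Bf m)}
  have hxS : x.1 ∈ S := hA.1
  set G := H.restrict S ⟨x.1, hxS⟩
  let f : (G.consProd T).W → (H.consProd T).W := Prod.map Subtype.val id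
  have hGR : ∀ a b : G.W, H.R 0 a.1 b.1 ↔ G.R 0 a b := fun _ _ => Iff.rfl
  let Z (k : ℕ) (y : (G.consProd T).W) : Prop :=
    ∀ z, ReachWithin (H.consProd T) id k (f y) z → (Sat (H.consProd T) v z (Bf m) ↔ z.1 ∈ S)
  have hforth : ∀ k i y z, Z (k + 1) y → (G.consProd T).R i y z →
      Z k z ∧ (H.consProd T).R i (f y) (f z) ∧ Sat (H.consProd T) v (f z) (Bf m) := by
    intro k i y z hy hyz
    have hR := consProd_R_map_fst hGR hyz
    exact ⟨fun w hw => hy w (Or.inr ⟨i, f z, hR, hw⟩), hR,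
      (hy (f z) (Or.inr ⟨i, f z, hR, ReachWithin.refl k _⟩)).2 z.1.2⟩
  have hback : ∀ k i y z, Z (k + 1) y → (H.consProd T).R i (f y) z →
      Sat (H.consProd T) v z (Bf m) → ∃ z', (G.consProd T).R i y z' ∧ f z' = z := by
    intro k i y z hy hyz hB
    have hzS := (hy z (Or.inr ⟨i, z, hyz, ReachWithin.refl k _⟩)).1 hB
    exact exists_consProd_R_map_fst_eq hGR hyz ⟨⟨z.1, hzS⟩, rfl⟩
  have hx : Z φ.md (⟨x.1, hxS⟩, x.2) := fun z hz => sat_Bf_iff_of_sat_Af hA hz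
  exact (sat_iff_sat_sigmaT f Z Set.univ (v' := fun q => {y | Sat _ v (f y) (betaF q)})
    (fun _ _ _ => Iff.rfl) hforth hback φ (Set.subset_univ _) le_rfl hx).1
    (hφ G (fun a => hH a.1) _ _)

end Forward

/-- `G` together with, for every point `a` and every `k`, a chain `(a, k, 2k) → ⋯ → (a, k, 0)`
(each point also sees itself) entered from `a` at its top; the points `(a, k, j)` with `2k < j`
are junk and see only themselves. -/
abbrev Frame.spine (G : Frame 1) : Frame 1 where
  W := G.W ⊕ (G.W × ℕ × ℕ)
  nonempty := ⟨.inl G.nonempty.some⟩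
  R _ := fun
    | .inl a, .inl b => G.R 0 a b
    | .inl a, .inr (b, k, j) => b = a ∧ j = 2 * k
    | .inr (a, k, j), c => c = .inr (a, k, j) ∨ c = .inr (a, k, j - 1) ∧ 0 < j ∧ j ≤ 2 * k

lemma ReflexiveFrame.spine {G : Frame 1} (hG : ReflexiveFrame G) :
    ReflexiveFrame G.spine
  | .inl a => hG a
  | .inr _ => Or.inl rfl

section Backward

variable {n m : ℕ} {H : Frame 1} {T : Frame n} {u : ℕ → Set (H.consProd T).W}

/-- Whether the chain `(a, k, ·)` carries `p` at its even points, over the point `t` of `T`. -/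
def LitChain (m : ℕ) (u : ℕ → Set (H.consProd T).W) (a : H.W) (t : T.W) (k : ℕ) : Prop :=
  k = m + 1 ∨ k ≤ m ∧ (a, t) ∈ u k

def spineVal (m : ℕ) (u : ℕ → Set (H.consProd T).W) : ℕ → Set (H.spine.consProd T).W
  | 0 => {w | match w.1 with
      | .inl _ => False
      | .inr (a, k, j) => j % 2 = 0 ∧ j ≤ 2 * k ∧ LitChain m u a w.2 k}
  | _ + 1 => ∅

variable {t : T.W}

lemma sat_pv_inr {a : H.W} {k j : ℕ} :
    Sat (H.spine.consProd T) (spineVal m u) (.inr (a, k, j), t) pv ↔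
      j % 2 = 0 ∧ j ≤ 2 * k ∧ LitChain m u a t k := Iff.rfl

lemma not_sat_pv_inl {a : H.W} : ¬ Sat (H.spine.consProd T) (spineVal m u) (.inl a, t) pv :=
  id

-- `simp` does not unify the frame arguments of `sat_dia_zero_consProd` and `sat_pv_inr` through
-- the reducible `Frame.spine`, so they are instantiated by hand.
lemma sat_alphaF_inr {a : H.W} {k : ℕ} (hk : LitChain m u a t k) (c j : ℕ) :
    Sat (H.spine.consProd T) (spineVal m u) (.inr (a, k, j), t) (alphaF c) ↔
      j ≤ 2 * k ∧ (j = 2 * c ∨ j + 1 = 2 * c) := by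
  induction c generalizing j with
  | zero =>
    rw [show alphaF 0 = .box 0 pv from rfl, sat_box_zero_consProd]
    simp only [or_imp, forall_and, forall_eq, and_imp, sat_pv_inr (H := H), hk, and_true]
    omega
  | succ c ih =>
    rw [alphaF, Function.iterate_succ_apply', ← alphaF]
    simp only [blackDia, sat_dia_zero_consProd (H := H.spine), sat_and, sat_neg,
      sat_pv_inr (H := H), hk, ih, exists_eq_or_imp, exists_eq_left, and_assoc, and_true]
    omega

lemma not_sat_Bf_inr {a : H.W} {k j : ℕ} :
    ¬ Sat (H.spine.consProd T) (spineVal m u) (.inr (a, k, j), t) (Bf m) := by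
  by_cases hk : LitChain m u a t k
  · have hkm : k ≤ m + 1 := by rcases hk with hk | hk <;> omega
    simp only [Bf, betaF, sat_and, sat_neg, sat_dia_zero_consProd (H := H.spine),
      sat_pv_inr (H := H), sat_alphaF_inr hk, hk, exists_eq_or_imp, exists_eq_left, and_assoc,
      and_true]
    omega
  · simp [Bf, betaF, sat_dia_zero_consProd (H := H.spine), sat_pv_inr (H := H), hk]

lemma sat_betaF_inl {a : H.W} {q : ℕ} :
    Sat (H.spine.consProd T) (spineVal m u) (.inl a, t) (betaF q) ↔ LitChain m u a t q := by
  simp only [betaF, sat_and, sat_neg, sat_dia_zero_consProd (H := H.spine)]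
  constructor
  · rintro ⟨-, _ | ⟨b, k, j⟩, hc, hp, hα⟩
    · exact hp.elim
    · obtain ⟨rfl, rfl⟩ := hc
      have hk := hp.2.2
      obtain rfl : k = q := by have := ((sat_alphaF_inr hk _ _).1 hα).2; omega
      exact hk
  · exact fun hq => ⟨not_sat_pv_inl, .inr (a, q, 2 * q), ⟨rfl, rfl⟩,
      ⟨by omega, le_rfl, hq⟩, (sat_alphaF_inr hq _ _).2 ⟨le_rfl, Or.inl rfl⟩⟩

lemma sat_Bf_iff {w : (H.spine.consProd T).W} :
    Sat (H.spine.consProd T) (spineVal m u) w (Bf m) ↔ ∃ a, w.1 = .inl a := by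
  obtain ⟨a | ⟨a, k, j⟩, t⟩ := w
  · exact iff_of_true (sat_betaF_inl.2 (Or.inl rfl)) ⟨a, rfl⟩
  · exact iff_of_false not_sat_Bf_inr (by simp)

lemma sat_Af_of_fst_eq_inl {φ : MF (n + 1)} {w : (H.spine.consProd T).W} {a : H.W}
    (hw : w.1 = .inl a) : Sat (H.spine.consProd T) (spineVal m u) w (Af m φ) := by
  have hB : ∀ {x y}, ReachWithin _ Fin.succ φ.md x y →
      (Sat (H.spine.consProd T) (spineVal m u) x (Bf m) ↔ Sat _ (spineVal m u) y (Bf m)) :=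
    fun h => by simp only [sat_Bf_iff, h.fst_eq]
  refine ⟨sat_Bf_iff.2 ⟨a, hw⟩, (sat_boxLe _ _ _).2 fun x _ hx => ?_,
    (sat_boxLe _ _ _).2 fun x _ hx => ?_⟩
  · exact (sat_boxLeTail _ _ _).2 fun y hy => (hB hy).1 hx
  · obtain ⟨y, hy, hBy⟩ := (sat_diaLeTail _ _ _).1 hx
    exact (hB hy).2 hBy

theorem valid_of_forall_valid_Af_imp_sigmaT {φ : MF (n + 1)} (hvars : φ.vars ⊆ Set.Iic m)
    (hσ : ∀ G : Frame 1, ReflexiveFrame G →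
      Valid (G.consProd T) (MF.imp (Af m φ) (sigmaT m φ)))
    (hH : ReflexiveFrame H) : Valid (H.consProd T) φ := by
  intro u x
  let f : (H.consProd T).W → (H.spine.consProd T).W := Prod.map .inl id
  have hR : ∀ a b, H.spine.R 0 (.inl a) (.inl b) ↔ H.R 0 a b := fun _ _ => Iff.rfl
  refine (sat_iff_sat_sigmaT f (fun _ _ => True) (Set.Iic m) (v := spineVal m u) ?_ ?_ ?_ φ hvars
    le_rfl trivial).2 (hσ _ hH.spine _ (f x) (sat_Af_of_fst_eq_inl rfl))
  · intro y q (hq : q ≤ m)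
    refine Iff.symm (sat_betaF_inl.trans ?_)
    rw [LitChain, or_iff_right (by omega), and_iff_right hq]
    rfl
  · exact fun _ _ _ z _ hyz =>
      ⟨trivial, consProd_R_map_fst hR hyz, sat_Bf_iff.2 ⟨z.1, rfl⟩⟩
  · intro _ _ _ _ _ hyz hB
    obtain ⟨a, ha⟩ := sat_Bf_iff.1 hB
    exact exists_consProd_R_map_fst_eq hR hyz ⟨a, ha.symm⟩

end Backward

section Main

variable {n m : ℕ}

theorem forall_valid_consProd_iff_Af_imp_sigmaT {T : Frame n} {φ : MF (n + 1)}
    (hvars : φ.vars ⊆ Set.Iic m) :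
    (∀ H : Frame 1, ReflexiveFrame H → Valid (H.consProd T) φ) ↔
      ∀ H : Frame 1, ReflexiveFrame H → Valid (H.consProd T) (MF.imp (Af m φ) (sigmaT m φ)) :=
  ⟨fun h _ hH => valid_Af_imp_sigmaT_of_forall_valid h hH,
    fun h _ hH => valid_of_forall_valid_Af_imp_sigmaT hvars h hH⟩

lemma mem_productLogic_cons_logicT_iff {Ls : Fin n → Set (MF 1)} {χ : MF (n + 1)} :
    χ ∈ productLogic (Fin.cons logicT Ls) ↔
      ∀ Ts : Fin n → Frame 1, (∀ j, ValidSet (Ts j) (Ls j)) →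
        ∀ H : Frame 1, ReflexiveFrame H → Valid (H.consProd (prodFrame Ts)) χ := by
  simp only [← valid_prodFrame_cons_iff, reflexiveFrame_iff_validSet_logicT]
  constructor
  · intro h Ts hTs H hH
    exact h _ ⟨Fin.cons H Ts, Fin.forall_fin_succ.2 ⟨hH, hTs⟩, rfl⟩
  · rintro h _ ⟨Gs, hGs, rfl⟩
    rw [← Fin.cons_self_tail Gs]
    exact h (Fin.tail Gs) (fun j => hGs j.succ) (Gs 0) (hGs 0)

end Main

end ModalProducts

open ModalProducts

theorem products_with_T_lemma_3_1_general (n m : ℕ) (Ls : Fin n → Set (MF 1))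
    (L : Set (MF (n+1)))
    (hL : L = productLogic (Fin.cases (motive := fun _ => Set (MF 1)) logicT Ls))
    (φ : MF (n+1)) (hvars : ∀ q ∈ φ.vars, 1 ≤ q ∧ q ≤ m) :
    φ ∈ L ↔ MF.imp (Af m φ) (sigmaT m φ) ∈ L := by
  obtain rfl : L = productLogic (Fin.cons logicT Ls) := hL
  simp only [mem_productLogic_cons_logicT_iff]
  exact forall₂_congr fun _ _ =>
    forall_valid_consProd_iff_Af_imp_sigmaT fun q hq => (hvars q hq).2

/-- **Lemma 3.1.** Let `n ≥ 1`, let `L₂, …, Lₙ` be Kripke complete monomodal logics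
(here `Ls i` for `i : Fin n`), and let `L = T × L₂ × … × Lₙ`.  For an `(n+1)`-modal
formula `φ` whose variables are among `p₁, …, p_m`, with `A` and `σ` defined from `φ`:
`φ ∈ L` iff `A → σ(φ) ∈ L`. -/
theorem products_with_T_lemma_3_1 (n m : ℕ) (Ls : Fin n → Set (MF 1))
    (hLs : ∀ i, KripkeComplete (Ls i))
    (L : Set (MF (n+1)))
    (hL : L = productLogic (Fin.cases (motive := fun _ => Set (MF 1)) logicT Ls))
    (φ : MF (n+1)) (hvars : ∀ q ∈ φ.vars, 1 ≤ q ∧ q ≤ m) :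
    φ ∈ L ↔ MF.imp (Af m φ) (sigmaT m φ) ∈ L :=
  products_with_T_lemma_3_1_general n m Ls L hL φ hvars
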